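/- Let h ≥ 1 and let (x_1,...,x_n) be a position of GCN(h; S_1,...,S_n) where each G_{S_i} is the h-stair of some sequence. Then (x_1,...,x_n) is a P-position (previous player wins) if and only if ⊕_i ⌊G_{S_i}(x_i)/h⌋ = 0 and (Σ_i x_i) ≡ 0 (mod h). -/

import Mathlib

open Finset

/-- mex of a set of naturals. -/
noncomputable def mex (T : Set ℕ) : ℕ := sInf Tᶜ

/-- Grundy value of the subtraction game Subtraction(S) on a heap of size x. -/
noncomputable def subG (S : Set ℕ) (x : ℕ) : ℕ :=
  mex {g | ∃ s, ∃ _ : s ∈ S ∧ 0 < s ∧ s ≤ x, g = subG S (x - s)}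
termination_by x
decreasing_by rename_i hs; obtain ⟨_, h1, h2⟩ := hs; omega

/-- Moves of the generalized cyclic Nimhoff GCN(h; S_1, ..., S_n). -/
def gcnMove {n : ℕ} (h : ℕ) (S : Fin n → Set ℕ) (x y : Fin n → ℕ) : Prop :=
  (∃ i, ∃ s, s ∈ S i ∧ 0 < s ∧ s ≤ x i ∧ y = Function.update x i (x i - s)) ∨
  (∃ s : Fin n → ℕ, (∀ i, s i ≤ x i) ∧ 0 < ∑ i, s i ∧ ∑ i, s i < h ∧
    y = fun i => x i - s i)

theorem gcnMove_sum_lt {n h : ℕ} {S : Fin n → Set ℕ} {x y : Fin n → ℕ}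
    (m : gcnMove h S x y) : ∑ i, y i < ∑ i, x i := by
  rcases m with ⟨i, s, _, hs0, hsx, rfl⟩ | ⟨s, hle, hpos, _, rfl⟩
  · refine Finset.sum_lt_sum (fun j _ => ?_) ⟨i, Finset.mem_univ i, ?_⟩
    · by_cases hj : j = i
      · subst hj; simp [Function.update]
      · simp [Function.update, hj]
    · simp [Function.update]; omega
  · obtain ⟨i, _, hi⟩ := Finset.exists_ne_zero_of_sum_ne_zero (by omega :
      ∑ i, s i ≠ 0)
    refine Finset.sum_lt_sum (fun j _ => by omega) ⟨i, Finset.mem_univ i, ?_⟩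
    have := hle i; omega

/-- Grundy value of a position of the generalized cyclic Nimhoff. -/
noncomputable def gcnGrundy (n h : ℕ) (S : Fin n → Set ℕ) (x : Fin n → ℕ) : ℕ :=
  mex {g | ∃ y, ∃ _ : gcnMove h S x y, g = gcnGrundy n h S y}
termination_by ∑ i, x i
decreasing_by exact gcnMove_sum_lt ‹_›

/-- P-positions of the generalized cyclic Nimhoff: every move leads to a
non-P-position. -/
def gcnPPos (n h : ℕ) (S : Fin n → Set ℕ) (x : Fin n → ℕ) : Prop :=
  ∀ y, ∀ _ : gcnMove h S x y, ¬ gcnPPos n h S y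
termination_by ∑ i, x i
decreasing_by exact gcnMove_sum_lt ‹_›

/-!
The P-positions are recognised as the unique kernel of the move graph: a set `Q` of positions
with no move inside `Q` and a move into `Q` from every position outside it. For
`Q = {⊕ ⌊G(xᵢ)/h⌋ = 0 ∧ h ∣ Σ xᵢ}`, the stair shape `G(m) = b(⌊m/h⌋) h + (m mod h)` splits
a Grundy value into a Nim part `⌊G/h⌋` and the residue `m mod h`. A move of heap `i` that keeps
`h ∣ Σ xᵢ` removes a multiple of `h`, so it fixes the residue and therefore changes the Nim part,
while a cyclic move removes fewer than `h` tokens and cannot keep the total divisible by `h`.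
Conversely, a nonzero Nim-sum is repaired as in Nim by lowering one Nim part, choosing the residue
of the target Grundy value to fix the total mod `h` as well; and when only the total is off, a
cyclic move takes its remainder out of the heaps' residues without touching any Nim part.
-/

lemma mex_notMem {T : Set ℕ} (hT : T.Finite) : mex T ∉ T :=
  Nat.sInf_mem hT.infinite_compl.nonempty

lemma mem_of_lt_mex {T : Set ℕ} {g : ℕ} (hg : g < mex T) : g ∈ T :=
  not_not.mp fun hgT => (Nat.sInf_le hgT).not_gt hg

lemma subG_options_finite (S : Set ℕ) (x : ℕ) :
    {g | ∃ s, ∃ _ : s ∈ S ∧ 0 < s ∧ s ≤ x, g = subG S (x - s)}.Finite :=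
  ((Set.finite_Iic x).image fun s => subG S (x - s)).subset <| by
    rintro g ⟨s, ⟨-, -, hs⟩, rfl⟩
    exact ⟨s, hs, rfl⟩

lemma subG_sub_ne {S : Set ℕ} {x s : ℕ} (hs : s ∈ S) (hs0 : 0 < s) (hsx : s ≤ x) :
    subG S (x - s) ≠ subG S x := by
  intro he
  have hx := mex_notMem (subG_options_finite S x)
  rw [← subG.eq_1] at hx
  exact hx ⟨s, ⟨hs, hs0, hsx⟩, he.symm⟩

lemma exists_subG_sub_eq {S : Set ℕ} {x g : ℕ} (hg : g < subG S x) :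
    ∃ s, (s ∈ S ∧ 0 < s ∧ s ≤ x) ∧ subG S (x - s) = g := by
  rw [subG.eq_1] at hg
  obtain ⟨s, hs, rfl⟩ := mem_of_lt_mex hg
  exact ⟨s, hs, rfl⟩

/-- `f` is the `h`-stair of `b`. -/
def IsStair (h : ℕ) (b f : ℕ → ℕ) : Prop :=
  ∀ x r, r < h → f (x * h + r) = b x * h + r

namespace IsStair

variable {h : ℕ} {b f : ℕ → ℕ}

lemma apply_eq (hf : IsStair h b f) (hh : 0 < h) (m : ℕ) : f m = b (m / h) * h + m % h := by
  conv_lhs => rw [← Nat.div_add_mod m h, Nat.mul_comm]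
  exact hf _ _ (Nat.mod_lt m hh)

lemma div_eq (hf : IsStair h b f) (hh : 0 < h) (m : ℕ) : f m / h = b (m / h) := by
  rw [hf.apply_eq hh, Nat.add_comm, Nat.add_mul_div_right _ _ hh,
    Nat.div_eq_of_lt (Nat.mod_lt m hh), Nat.zero_add]

lemma mod_eq (hf : IsStair h b f) (hh : 0 < h) (m : ℕ) : f m % h = m % h := by
  rw [hf.apply_eq hh, Nat.add_comm, Nat.add_mul_mod_self_right, Nat.mod_mod]

end IsStair

lemma Nat.sub_div_of_le_mod {m s h : ℕ} (hs : s ≤ m % h) : (m - s) / h = m / h := by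
  rcases Nat.eq_zero_or_pos h with rfl | hh
  · simp
  have hm := Nat.div_add_mod' m h
  have hlt := Nat.mod_lt m hh
  exact Nat.div_eq_of_lt_le (by omega) (by rw [Nat.add_one_mul]; omega)

lemma Nat.eq_of_div_eq_of_mod_eq {m m' h : ℕ} (hdiv : m / h = m' / h) (hmod : m % h = m' % h) :
    m = m' := by
  rw [← Nat.div_add_mod m h, ← Nat.div_add_mod m' h, hdiv, hmod]

lemma exists_le_sum_eq {ι : Type*} [Fintype ι] (c : ι → ℕ) {r : ℕ} (hr : r ≤ ∑ i, c i) :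
    ∃ s : ι → ℕ, s ≤ c ∧ ∑ i, s i = r := by
  obtain ⟨g, hg, hsum⟩ := Finsupp.exists_le_degree_eq (Finsupp.equivFunOnFinite.symm c) r
    (by simpa [Finsupp.degree_eq_sum] using hr)
  exact ⟨g, fun i => by simpa using hg i, by rwa [Finsupp.degree_eq_sum] at hsum⟩

lemma sum_update_add {ι : Type*} [Fintype ι] [DecidableEq ι] (x : ι → ℕ) (i : ι) (v : ℕ) :
    ∑ j, Function.update x i v j + x i = ∑ j, x j + v := by
  rw [Finset.sum_update_of_mem (mem_univ i), ← Finset.sum_erase_add _ _ (mem_univ i),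
    Finset.sdiff_singleton_eq_erase]
  ring

lemma exists_xor_fold_xor_lt {ι : Type*} [DecidableEq ι] (f : ι → ℕ) (s : Finset ι) {a : ℕ}
    (ha : a < s.fold (· ^^^ · : ℕ → ℕ → ℕ) 0 f) :
    ∃ i ∈ s, f i ^^^ (s.fold (· ^^^ · : ℕ → ℕ → ℕ) 0 f ^^^ a) < f i := by
  induction s using Finset.induction_on generalizing a with
  | empty => simp at ha
  | insert j s hj ih =>
    rw [fold_insert hj] at ha ⊢
    rcases Nat.lt_xor_cases ha with hlt | hlt
    · refine ⟨j, mem_insert_self j s, ?_⟩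
      rwa [Nat.xor_assoc, ← Nat.xor_assoc, Nat.xor_self, Nat.zero_xor, Nat.xor_comm]
    · obtain ⟨i, hi, hlt'⟩ := ih hlt
      refine ⟨i, mem_insert_of_mem hi, ?_⟩
      convert hlt' using 2
      ac_rfl

def nimSum {ι : Type*} [Fintype ι] (f : ι → ℕ) : ℕ :=
  univ.fold (· ^^^ · : ℕ → ℕ → ℕ) 0 f

section NimSum

variable {ι : Type*} [Fintype ι] [DecidableEq ι]

lemma nimSum_apply_update (g : ι → ℕ → ℕ) (x : ι → ℕ) (i : ι) (v : ℕ) :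
    nimSum (fun j => g j (Function.update x i v j)) =
      nimSum (fun j => g j (x j)) ^^^ g i (x i) ^^^ g i v := by
  have hrest : (univ.erase i).fold (· ^^^ · : ℕ → ℕ → ℕ) 0
      (fun j => g j (Function.update x i v j)) =
      (univ.erase i).fold (· ^^^ · : ℕ → ℕ → ℕ) 0 (fun j => g j (x j)) :=
    fold_congr fun j hj => by rw [Function.update_of_ne (ne_of_mem_erase hj)]
  rw [nimSum, nimSum, ← insert_erase (mem_univ i), fold_insert (notMem_erase i univ),
    fold_insert (notMem_erase i univ), hrest, Function.update_self]
  simp [Nat.xor_comm]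

lemma exists_xor_nimSum_lt (f : ι → ℕ) (hf : nimSum f ≠ 0) : ∃ i, f i ^^^ nimSum f < f i := by
  obtain ⟨i, -, hi⟩ := exists_xor_fold_xor_lt f univ (Nat.pos_of_ne_zero hf)
  exact ⟨i, by simpa [nimSum] using hi⟩

end NimSum

section Game

variable {n h : ℕ} {S : Fin n → Set ℕ}

theorem gcnPPos_iff_of_kernel (Q : (Fin n → ℕ) → Prop)
    (independent : ∀ x y, Q x → gcnMove h S x y → ¬ Q y)
    (absorbing : ∀ x, ¬ Q x → ∃ y, gcnMove h S x y ∧ Q y) (x : Fin n → ℕ) :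
    gcnPPos n h S x ↔ Q x := by
  induction hN : ∑ i, x i using Nat.strong_induction_on generalizing x with
  | _ N ih =>
    have ih' (y) (hm : gcnMove h S x y) : gcnPPos n h S y ↔ Q y :=
      ih _ (hN ▸ gcnMove_sum_lt hm) y rfl
    rw [gcnPPos]
    constructor
    · intro hP
      by_contra hQ
      obtain ⟨y, hm, hQy⟩ := absorbing x hQ
      exact hP y hm ((ih' y hm).mpr hQy)
    · intro hQ y hm hPy
      exact independent x y hQ hm ((ih' y hm).mp hPy)

def StairPPos (h : ℕ) (S : Fin n → Set ℕ) (x : Fin n → ℕ) : Prop :=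
  nimSum (fun i => subG (S i) (x i) / h) = 0 ∧ (∑ i, x i) % h = 0

variable {a : Fin n → ℕ → ℕ} (hh : 0 < h) (hstair : ∀ i, IsStair h (a i) (subG (S i)))
include hh hstair

lemma StairPPos.not_of_gcnMove {x y : Fin n → ℕ} (hx : StairPPos h S x) (hm : gcnMove h S x y) :
    ¬ StairPPos h S y := by
  obtain ⟨hFx, htotx⟩ := hx
  rintro ⟨hFy, htoty⟩
  rcases hm with ⟨i, s, hsS, hs0, hsx, rfl⟩ | ⟨s, hsx, hpos, hlt, rfl⟩
  · have hmod : (x i - s) % h = x i % h := by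
      simpa [Nat.add_mod, htotx, htoty] using congrArg (· % h) (sum_update_add x i (x i - s)).symm
    have hdiv : subG (S i) (x i - s) / h = subG (S i) (x i) / h := by
      rw [nimSum_apply_update (fun j m => subG (S j) m / h), hFx, Nat.zero_xor,
        Nat.xor_eq_zero_iff] at hFy
      exact hFy.symm
    refine subG_sub_ne hsS hs0 hsx (Nat.eq_of_div_eq_of_mod_eq hdiv ?_)
    rw [(hstair i).mod_eq hh, (hstair i).mod_eq hh, hmod]
  · have hsum : ∑ i, (x i - s i) + ∑ i, s i = ∑ i, x i := by
      rw [← sum_add_distrib]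
      exact sum_congr rfl fun i _ => Nat.sub_add_cancel (hsx i)
    have hmod : (∑ i, s i) % h = 0 := by
      simpa [Nat.add_mod, htotx, htoty] using congrArg (· % h) hsum
    rw [Nat.mod_eq_of_lt hlt] at hmod
    omega

lemma StairPPos.exists_cyclic_move {x : Fin n → ℕ}
    (hF : nimSum (fun i => subG (S i) (x i) / h) = 0) (htot : (∑ i, x i) % h ≠ 0) :
    ∃ y, gcnMove h S x y ∧ StairPPos h S y := by
  obtain ⟨s, hs, hsum⟩ := exists_le_sum_eq (fun i => x i % h) (r := (∑ i, x i) % h)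
    (by rw [sum_nat_mod]; exact Nat.mod_le _ _)
  have hsx (i) : s i ≤ x i := (hs i).trans (Nat.mod_le _ _)
  refine ⟨fun i => x i - s i,
    Or.inr ⟨s, hsx, hsum ▸ Nat.pos_of_ne_zero htot, hsum ▸ Nat.mod_lt _ hh, rfl⟩, ?_, ?_⟩
  · convert hF using 3 with i
    rw [(hstair i).div_eq hh, (hstair i).div_eq hh, Nat.sub_div_of_le_mod (hs i)]
  · rw [sum_tsub_distrib _ fun i _ => hsx i, hsum]
    exact Nat.sub_mod_eq_zero_of_mod_eq (Nat.mod_mod _ _).symm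

lemma StairPPos.exists_nim_move {x : Fin n → ℕ}
    (hF : nimSum (fun i => subG (S i) (x i) / h) ≠ 0) :
    ∃ y, gcnMove h S x y ∧ StairPPos h S y := by
  set F := fun i => subG (S i) (x i) / h
  obtain ⟨i, hi⟩ := exists_xor_nimSum_lt F hF
  set c := F i ^^^ nimSum F with hc
  -- the residue that makes the new total divisible by `h`
  set r := (x i + (h - (∑ j, x j) % h)) % h
  have hr : r < h := Nat.mod_lt _ hh
  have hlt : c * h + r < subG (S i) (x i) :=
    calc c * h + r < (c + 1) * h := by rw [Nat.add_one_mul]; omega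
      _ ≤ F i * h := Nat.mul_le_mul_right _ hi
      _ ≤ subG (S i) (x i) := Nat.div_mul_le_self _ _
  obtain ⟨s, ⟨hsS, hs0, hsx⟩, hG⟩ := exists_subG_sub_eq hlt
  refine ⟨Function.update x i (x i - s), Or.inl ⟨i, s, hsS, hs0, hsx, rfl⟩, ?_, ?_⟩
  · have hdiv : subG (S i) (x i - s) / h = c := by
      rw [hG, Nat.add_comm, Nat.add_mul_div_right _ _ hh, Nat.div_eq_of_lt hr, Nat.zero_add]
    rw [nimSum_apply_update (fun j m => subG (S j) m / h), hdiv, hc]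
    simp [F, Nat.xor_comm]
  · have hmod : x i - s ≡ x i + (h - (∑ j, x j) % h) [MOD h] := by
      rw [Nat.ModEq, ← (hstair i).mod_eq hh, hG, Nat.add_comm, Nat.add_mul_mod_self_right,
        Nat.mod_mod]
    have htot := Nat.div_add_mod (∑ j, x j) h
    have htot_lt := Nat.mod_lt (∑ j, x j) hh
    have key : ∑ j, Function.update x i (x i - s) j + x i ≡ 0 + x i [MOD h] :=
      calc ∑ j, Function.update x i (x i - s) j + x i
          = ∑ j, x j + (x i - s) := sum_update_add x i (x i - s)
        _ ≡ ∑ j, x j + (x i + (h - (∑ j, x j) % h)) [MOD h] := hmod.add_left _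
        _ = h * ((∑ j, x j) / h + 1) + x i := by rw [Nat.mul_succ]; omega
        _ ≡ 0 + x i [MOD h] := by simp [Nat.ModEq, Nat.add_mod]
    exact Nat.ModEq.add_right_cancel' _ key

lemma StairPPos.exists_gcnMove {x : Fin n → ℕ} (hx : ¬ StairPPos h S x) :
    ∃ y, gcnMove h S x y ∧ StairPPos h S y := by
  by_cases hF : nimSum (fun i => subG (S i) (x i) / h) = 0
  · exact StairPPos.exists_cyclic_move hh hstair hF fun htot => hx ⟨hF, htot⟩
  · exact StairPPos.exists_nim_move hh hstair hF

end Game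

theorem gcn_ppos_iff_general (n h : ℕ) (hh : 0 < h) (S : Fin n → Set ℕ)
    (a : Fin n → ℕ → ℕ)
    (hstair : ∀ i x r, r < h → subG (S i) (x * h + r) = a i x * h + r)
    (x : Fin n → ℕ) :
    gcnPPos n h S x ↔
      Finset.univ.fold (· ^^^ · : ℕ → ℕ → ℕ) 0 (fun i => subG (S i) (x i) / h) = 0 ∧
        (∑ i, x i) % h = 0 :=
  gcnPPos_iff_of_kernel (StairPPos h S)
    (fun _ _ hx hm => hx.not_of_gcnMove hh hstair hm)
    (fun _ hx => StairPPos.exists_gcnMove hh hstair hx) x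

/-- characterization of P-positions of the generalized cyclic
Nimhoff when each subtraction game has an `h`-stair Grundy sequence. -/
theorem gcn_ppos_iff (n h : ℕ) (hh : 0 < h) (S : Fin n → Set ℕ)
    (hS : ∀ i, ∀ s ∈ S i, 0 < s) (a : Fin n → ℕ → ℕ)
    (hstair : ∀ i x r, r < h → subG (S i) (x * h + r) = a i x * h + r)
    (x : Fin n → ℕ) :
    gcnPPos n h S x ↔
      Finset.univ.fold (· ^^^ · : ℕ → ℕ → ℕ) 0 (fun i => subG (S i) (x i) / h) = 0 ∧
        (∑ i, x i) % h = 0 :=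
  gcn_ppos_iff_general n h hh S a hstair x
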